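/- Let 𝒩 be the k-neighborhood graph of a weighted undirected graph G (each vertex keeps edges to its k nearest neighbors). Then for every vertex v, the set of k closest reachable vertices to v in 𝒩 equals the set of k closest reachable vertices to v in G: S_𝒩[k](v) = S_G[k](v), where ties in 𝒩 are broken as in G. -/

import Mathlib

open scoped ENNReal

namespace Stmt14

variable {V : Type*}

/-- Endpoint of a walk starting at `u` with subsequent vertices given by the list. -/
def last : V → List V → V
  | u, [] => u
  | _, x :: xs => last x xs

/-- Weight of a walk starting at `u` with subsequent vertices given by the list. -/
noncomputable def cost (w : V → V → ℝ≥0∞) : V → List V → ℝ≥0∞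
  | _, [] => 0
  | u, x :: xs => w u x + cost w x xs

/-- `h`-hop-limited distance from `u` to `v` (non-edges have weight `⊤`). -/
noncomputable def hdist (w : V → V → ℝ≥0∞) (h : ℕ) (u v : V) : ℝ≥0∞ :=
  ⨅ p ∈ {p : List V | p.length ≤ h ∧ last u p = v}, cost w u p

/-- Shortest-path distance from `u` to `v`. -/
noncomputable def dist (w : V → V → ℝ≥0∞) (u v : V) : ℝ≥0∞ :=
  ⨅ h : ℕ, hdist w h u v

/-- `S` is a set of (at most) `k` closest reachable vertices to `v` (excluding `v`),
with ties broken arbitrarily: members of `S` are reachable and distinct from `v`,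
`|S| ≤ k`, every member is at least as close as every reachable non-member, and `S`
has exactly `k` elements unless it already contains all reachable vertices. -/
def IsKClosest [Fintype V] (w : V → V → ℝ≥0∞) (k : ℕ) (v : V) (S : Finset V) : Prop :=
  (∀ u ∈ S, u ≠ v ∧ dist w v u < ⊤) ∧ S.card ≤ k ∧
  (∀ y ∈ S, ∀ z, z ∉ S → z ≠ v → dist w v z < ⊤ → dist w v y ≤ dist w v z) ∧
  (∀ z, z ∉ S → z ≠ v → dist w v z < ⊤ → S.card = k)

/-- Weight function of the union `G ∪ G^(k)` of the graph with the `k`-shortcut hopset: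
hopset edges `(u,v)` (present when `u ∈ S v` or `v ∈ S u`) get weight `d_G(u,v)`. -/
noncomputable def unionW [Fintype V] [DecidableEq V] (w : V → V → ℝ≥0∞) (S : V → Finset V)
    (u v : V) : ℝ≥0∞ :=
  if u ∈ S v ∨ v ∈ S u then min (w u v) (dist w u v) else w u v


/-- Minimum number of hops of a minimum-weight `u`–`v` path. -/
noncomputable def minHopsD (w : V → V → ℝ≥0∞) (u v : V) : ℕ :=
  sInf {ℓ : ℕ | ∃ p : List V, p.length = ℓ ∧ last u p = v ∧ cost w u p = dist w u v}

/-- Strict comparison of vertices by distance, with ties broken by the tie-breaking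
key `tie` (lexicographically). -/
def keyLt (d : V → ℝ≥0∞) (tie : V → ℕ × ℕ) (y z : V) : Prop :=
  Prod.Lex (· < ·) (Prod.Lex (· < ·) (· < ·)) (d y, tie y) (d z, tie z)

/-- `S` is the set of the `k` closest vertices of `dom` to `v` (excluding `v`) with
respect to the distance function `d`, with ties broken by the key `tie`. -/
def IsKNear (d : V → ℝ≥0∞) (tie : V → ℕ × ℕ) (dom : Finset V) (k : ℕ) (v : V)
    (S : Finset V) : Prop :=
  S ⊆ dom ∧ v ∉ S ∧ S.card ≤ k ∧ (∀ y ∈ S, d y < ⊤) ∧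
  (∀ y ∈ S, ∀ z ∈ dom, z ∉ S → z ≠ v → d z < ⊤ → keyLt d tie y z) ∧
  (∀ z ∈ dom, z ≠ v → d z < ⊤ → z ∉ S → S.card = k)

/-- `nb` assigns to every vertex its `k` nearest neighbors, by edge weight with ties
broken by vertex identifiers `rank` (all neighbors if the degree is less than `k`). -/
def IsKNbhd (w : V → V → ℝ≥0∞) (k : ℕ) (rank : V → ℕ) (nb : V → Finset V) : Prop :=
  ∀ v, (∀ u ∈ nb v, u ≠ v ∧ w v u < ⊤) ∧ (nb v).card ≤ k ∧
    (∀ y ∈ nb v, ∀ z, z ∉ nb v → z ≠ v → w v z < ⊤ →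
      w v y < w v z ∨ (w v y = w v z ∧ rank y < rank z)) ∧
    (∀ z, z ≠ v → w v z < ⊤ → z ∉ nb v → (nb v).card = k)

/-- Weight function of the `k`-neighborhood graph `𝒩`: the edge `(u,v)` is kept iff
`v` is among the `k` nearest neighbors of `u` or vice versa. -/
noncomputable def nbhdW [DecidableEq V] (w : V → V → ℝ≥0∞) (nb : V → Finset V)
    (u v : V) : ℝ≥0∞ :=
  if v ∈ nb u ∨ u ∈ nb v then w u v else ⊤


/-!
A vertex `u` among the `k` closest to `v` in `G` has a predecessor `x` on a shortest
`v`–`u` path with fewest hops; `x` is `v` itself or again among the `k` closest, and by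
induction on the hop count `d_𝒩(v, x) = d_G(v, x)`. The edge `xu` survives in `𝒩`: were
`u` not among the `k` nearest neighbours of `x`, those `k` neighbours together with `x`
(minus `v`) would all precede `u` in the tie-broken order of distances from `v`, leaving
no room for `u` in the `k` closest. Hence `𝒩` and `G` agree on the distances to the `k`
closest vertices, are ordered alike elsewhere since `d_𝒩 ≥ d_G`, and the tie-broken
`k`-closest set is unique.
-/

section Paths

theorem last_append (u : V) (p q : List V) : last u (p ++ q) = last (last u p) q := by
  induction p generalizing u with
  | nil => rfl
  | cons x xs ih => exact ih x

theorem last_concat (u x : V) (p : List V) : last u (p ++ [x]) = x := by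
  rw [last_append]; rfl

theorem cost_append (w : V → V → ℝ≥0∞) (u : V) (p q : List V) :
    cost w u (p ++ q) = cost w u p + cost w (last u p) q := by
  induction p generalizing u with
  | nil => simp [cost, last]
  | cons x xs ih => simp [cost, last, ih x, add_assoc]

theorem cost_concat (w : V → V → ℝ≥0∞) (u x : V) (p : List V) :
    cost w u (p ++ [x]) = cost w u p + w (last u p) x := by
  simp [cost_append, cost]

theorem cost_mono {w w' : V → V → ℝ≥0∞} (h : ∀ a b, w a b ≤ w' a b) (u : V) (p : List V) :
    cost w u p ≤ cost w' u p := by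
  induction p generalizing u with
  | nil => exact le_rfl
  | cons x xs ih => exact add_le_add (h u x) (ih x)

theorem dist_le_cost (w : V → V → ℝ≥0∞) {u v : V} {p : List V} (h : last u p = v) :
    dist w u v ≤ cost w u p :=
  (iInf_le _ p.length).trans (iInf₂_le p ⟨le_rfl, h⟩)

theorem dist_self (w : V → V → ℝ≥0∞) (v : V) : dist w v v = 0 :=
  nonpos_iff_eq_zero.mp (dist_le_cost w (p := []) rfl)

theorem dist_mono {w w' : V → V → ℝ≥0∞} (h : ∀ a b, w a b ≤ w' a b) (u v : V) :
    dist w u v ≤ dist w' u v :=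
  iInf_mono fun _ => iInf₂_mono fun p _ => cost_mono h u p

theorem dist_le_dist_add (w : V → V → ℝ≥0∞) (u x z : V) :
    dist w u z ≤ dist w u x + w x z := by
  simp only [dist, hdist, ENNReal.iInf_add]
  refine le_iInf₂ fun h p => le_iInf fun hp => ?_
  calc dist w u z ≤ cost w u (p ++ [z]) := dist_le_cost w (last_concat u z p)
    _ = cost w u p + w x z := by rw [cost_concat, hp.2]

theorem exists_nodup_cost_le (w : V → V → ℝ≥0∞) (u : V) (p : List V) :
    ∃ q : List V, (u :: q).Nodup ∧ last u q = last u p ∧ cost w u q ≤ cost w u p := by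
  induction p generalizing u with
  | nil => exact ⟨[], by simp, rfl, le_rfl⟩
  | cons x xs ih =>
    obtain ⟨q, hnd, hlast, hcost⟩ := ih x
    by_cases hu : u ∈ x :: q
    · obtain ⟨r₁, r₂, hsplit⟩ := List.append_of_mem hu
      refine ⟨r₂, hnd.sublist ?_, ?_, ?_⟩
      · rw [hsplit]; exact List.sublist_append_right _ _
      · have : last u (x :: q) = last u r₂ := by rw [hsplit, last_append]; rfl
        rw [← this]
        exact hlast
      · calc cost w u r₂ ≤ cost w u (x :: q) := by
              rw [hsplit, cost_append, cost]
              exact le_add_self.trans le_add_self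
          _ ≤ cost w u (x :: xs) := add_le_add le_rfl hcost
    · exact ⟨x :: q, List.nodup_cons.mpr ⟨hu, hnd⟩, hlast, add_le_add le_rfl hcost⟩

theorem dist_eq_hdist_card [Fintype V] (w : V → V → ℝ≥0∞) (u v : V) :
    dist w u v = hdist w (Fintype.card V) u v := by
  refine le_antisymm (iInf_le _ _) (le_iInf fun h => le_iInf₂ fun p hp => ?_)
  obtain ⟨q, hnd, hlast, hcost⟩ := exists_nodup_cost_le w u p
  refine (iInf₂_le q ⟨?_, hlast.trans hp.2⟩).trans hcost
  exact (Nat.le_succ _).trans hnd.length_le_card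

theorem exists_cost_eq_dist [Fintype V] (w : V → V → ℝ≥0∞) {u v : V} (h : dist w u v ≠ ⊤) :
    ∃ p : List V, last u p = v ∧ cost w u p = dist w u v := by
  set P : Set (List V) := {p | p.length ≤ Fintype.card V ∧ last u p = v}
  have hP : P.Finite := (List.finite_length_le V (Fintype.card V)).subset fun p hp => hp.1
  have hdist : dist w u v = sInf (cost w u '' P) := by
    rw [dist_eq_hdist_card, hdist, sInf_image]
  have hne : (cost w u '' P).Nonempty := by
    rw [Set.nonempty_iff_ne_empty]
    rintro hempty
    rw [hdist, hempty, sInf_empty] at h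
    exact h rfl
  obtain ⟨p, hp, hcost⟩ := hne.csInf_mem (hP.image _)
  exact ⟨p, hp.2, hcost.trans hdist.symm⟩

theorem minHopsD_le {w : V → V → ℝ≥0∞} {u v : V} {p : List V} (hlast : last u p = v)
    (hcost : cost w u p = dist w u v) : minHopsD w u v ≤ p.length :=
  Nat.sInf_le ⟨p, rfl, hlast, hcost⟩

theorem exists_length_eq_minHopsD [Fintype V] (w : V → V → ℝ≥0∞) {u v : V}
    (h : dist w u v ≠ ⊤) :
    ∃ p : List V, p.length = minHopsD w u v ∧ last u p = v ∧ cost w u p = dist w u v := by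
  obtain ⟨p, hlast, hcost⟩ := exists_cost_eq_dist w h
  exact Nat.sInf_mem (s := {ℓ | ∃ p : List V, p.length = ℓ ∧ last u p = v ∧
    cost w u p = dist w u v}) ⟨p.length, p, rfl, hlast, hcost⟩

theorem minHopsD_le_succ [Fintype V] (w : V → V → ℝ≥0∞) {v x y : V}
    (hx : dist w v x ≠ ⊤) (h : dist w v y = dist w v x + w x y) :
    minHopsD w v y ≤ minHopsD w v x + 1 := by
  obtain ⟨p, hlen, hlast, hcost⟩ := exists_length_eq_minHopsD w hx
  have : cost w v (p ++ [y]) = dist w v y := by rw [cost_concat, hcost, hlast, h]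
  simpa [hlen] using minHopsD_le (last_concat v y p) this

theorem exists_pred_minHopsD [Fintype V] (w : V → V → ℝ≥0∞) {v u : V} (hne : u ≠ v)
    (hfin : dist w v u ≠ ⊤) :
    ∃ x, dist w v x + w x u = dist w v u ∧ minHopsD w v x + 1 ≤ minHopsD w v u := by
  obtain ⟨p, hlen, hlast, hcost⟩ := exists_length_eq_minHopsD w hfin
  obtain ⟨q, b, rfl⟩ :=
    (List.eq_nil_or_concat p).resolve_left (by rintro rfl; exact hne hlast.symm)
  rw [List.concat_eq_append, last_concat] at hlast
  subst hlast
  rw [List.concat_eq_append, cost_concat] at hcost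
  rw [List.concat_eq_append, List.length_append, List.length_singleton] at hlen
  set x := last v q
  have hwxu : w x b ≠ ⊤ := fun h => hfin (by rw [← hcost, h, add_top])
  have hpred : dist w v x + w x b = dist w v b :=
    le_antisymm (hcost ▸ add_le_add (dist_le_cost w rfl) le_rfl) (dist_le_dist_add w v x b)
  have hq : cost w v q = dist w v x :=
    le_antisymm (ENNReal.le_of_add_le_add_right hwxu (hcost.trans hpred.symm).le)
      (dist_le_cost w rfl)
  exact ⟨x, hpred, hlen ▸ Nat.succ_le_succ (minHopsD_le rfl hq)⟩

end Paths

section Order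

variable {d d' : V → ℝ≥0∞} {tie : V → ℕ × ℕ} {y z : V}

def key (d : V → ℝ≥0∞) (tie : V → ℕ × ℕ) (y : V) : ℝ≥0∞ ×ₗ (ℕ ×ₗ ℕ) :=
  toLex (d y, toLex (tie y))

theorem keyLt_iff_key_lt : keyLt d tie y z ↔ key d tie y < key d tie z := Iff.rfl

theorem keyLt.asymm (h : keyLt d tie y z) : ¬keyLt d tie z y :=
  lt_asymm (keyLt_iff_key_lt.mp h)

theorem keyLt_irrefl (y : V) : ¬keyLt d tie y y := lt_irrefl (key d tie y)

theorem keyLt.le (h : keyLt d tie y z) : d y ≤ d z :=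
  Prod.Lex.monotone_fst _ _ (keyLt_iff_key_lt.mp h).le

theorem keyLt_of_lt (h : d y < d z) : keyLt d tie y z := Prod.Lex.left _ _ h

theorem keyLt_of_le_of_tie_lt (hd : d y ≤ d z) (ht : toLex (tie y) < toLex (tie z)) :
    keyLt d tie y z := by
  rcases hd.lt_or_eq with hlt | heq
  · exact keyLt_of_lt hlt
  · exact Prod.lex_def.mpr (Or.inr ⟨heq, ht⟩)

theorem keyLt.of_le (h : keyLt d tie y z) (hy : d' y = d y) (hz : d z ≤ d' z) :
    keyLt d' tie y z := by
  rcases Prod.lex_def.mp h with hlt | ⟨heq, ht⟩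
  · exact keyLt_of_lt (hy ▸ hlt.trans_le hz)
  · exact keyLt_of_le_of_tie_lt (by rw [hy]; exact heq.le.trans hz) ht

end Order

namespace IsKNear

variable {d d' : V → ℝ≥0∞} {tie : V → ℕ × ℕ} {dom : Finset V} {k : ℕ} {v u : V}
  {S S' : Finset V}

theorem subset (h : IsKNear d tie dom k v S) (h' : IsKNear d tie dom k v S') : S ⊆ S' := by
  obtain ⟨hdom, hv, hcard, hfin, hlt, -⟩ := h
  obtain ⟨hdom', hv', -, hfin', hlt', hfull'⟩ := h'
  intro y hy
  by_contra hy'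
  have hyv : y ≠ v := fun e => hv (e ▸ hy)
  have hS'S : S' ⊆ S := fun z hz => by
    by_contra hz'
    exact (hlt y hy z (hdom' hz) hz' (fun e => hv' (e ▸ hz)) (hfin' z hz)).asymm
      (hlt' z hz y (hdom hy) hy' hyv (hfin y hy))
  have hS'k : S'.card = k := hfull' y (hdom hy) hyv (hfin y hy) hy'
  exact hy' (Finset.eq_of_subset_of_card_le hS'S (hcard.trans hS'k.ge) ▸ hy)

theorem eq (h : IsKNear d tie dom k v S) (h' : IsKNear d tie dom k v S') : S = S' :=
  (h.subset h').antisymm (h'.subset h)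

theorem mem_of_keyLt (h : IsKNear d tie dom k v S) (hu : u ∈ S) {z : V} (hz : z ∈ dom)
    (hzv : z ≠ v) (hzu : keyLt d tie z u) : z ∈ S := by
  obtain ⟨-, -, -, hfin, hlt, -⟩ := h
  by_contra hzS
  exact hzu.asymm (hlt u hu z hz hzS hzv (hzu.le.trans_lt (hfin u hu)))

/-- Everything preceding a member of `S` lies in `S` as well, so there is room for fewer
than `k` such vertices. -/
theorem card_lt_of_forall_keyLt [DecidableEq V] (h : IsKNear d tie dom k v S) (hu : u ∈ S)
    {T : Finset V} (hTdom : T ⊆ dom) (hT : ∀ z ∈ T, z ≠ v ∧ keyLt d tie z u) : T.card < k := by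
  have huT : u ∉ T := fun huT => keyLt_irrefl u (hT u huT).2
  have hsub : insert u T ⊆ S := Finset.insert_subset hu fun z hz =>
    h.mem_of_keyLt hu (hTdom hz) (hT z hz).1 (hT z hz).2
  have := Finset.card_le_card hsub
  rw [Finset.card_insert_of_notMem huT] at this
  exact Nat.lt_of_succ_le (this.trans h.2.2.1)

theorem mono (h : IsKNear d tie dom k v S) (hle : ∀ u, d u ≤ d' u)
    (hge : ∀ u ∈ S, d' u ≤ d u) : IsKNear d' tie dom k v S := by
  obtain ⟨hdom, hv, hcard, hfin, hlt, hfull⟩ := h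
  have heq : ∀ u ∈ S, d' u = d u := fun u hu => (hge u hu).antisymm (hle u)
  refine ⟨hdom, hv, hcard, fun y hy => heq y hy ▸ hfin y hy, ?_, ?_⟩
  · exact fun y hy z hz hzS hzv hzfin =>
      (hlt y hy z hz hzS hzv ((hle z).trans_lt hzfin)).of_le (heq y hy) (hle z)
  · exact fun z hz hzv hzfin => hfull z hz hzv ((hle z).trans_lt hzfin)

end IsKNear

section NeighborhoodGraph

variable {w : V → V → ℝ≥0∞} {k : ℕ} {rank : V → ℕ} {nb : V → Finset V} {v x u : V}

theorem keyLt_of_pred (r : V → ℕ) (hpred : dist w v x + w x u = dist w v u)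
    (hhops : minHopsD w v x + 1 ≤ minHopsD w v u) :
    keyLt (dist w v) (fun z => (minHopsD w v z, r z)) x u :=
  keyLt_of_le_of_tie_lt (hpred ▸ le_self_add) (Prod.Lex.left _ _ hhops)

theorem le_nbhdW [DecidableEq V] (w : V → V → ℝ≥0∞) (nb : V → Finset V) (a b : V) :
    w a b ≤ nbhdW w nb a b := by
  unfold nbhdW
  split_ifs
  · exact le_rfl
  · exact le_top

variable [Fintype V]

/-- `y` is at least as near to `x` as `u` is, so going through `x` reaches `y` no later than `u`. -/
theorem keyLt_of_mem_nb (hnb : IsKNbhd w k rank nb) (hfin : dist w v u ≠ ⊤)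
    (hpred : dist w v x + w x u = dist w v u) (hhops : minHopsD w v x + 1 ≤ minHopsD w v u)
    {y : V} (hy : y ∈ nb x) (hu : u ∉ nb x) :
    keyLt (dist w v) (fun z => (minHopsD w v z, rank z)) y u := by
  rw [← hpred] at hfin
  obtain ⟨hxfin, hwfin⟩ := ENNReal.add_ne_top.mp hfin
  have hux : u ≠ x := by rintro rfl; omega
  have hvy : dist w v y ≤ dist w v x + w x y := dist_le_dist_add w v x y
  rcases (hnb x).2.2.1 y hy u hu hux hwfin.lt_top with hlt | ⟨heq, hrank⟩
  · exact keyLt_of_lt (hvy.trans_lt (hpred ▸ ENNReal.add_lt_add_left hxfin hlt))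
  · rcases (hvy.trans (heq ▸ hpred).le).lt_or_eq with hlt | hyu
    · exact keyLt_of_lt hlt
    · have hhy : minHopsD w v y ≤ minHopsD w v u :=
        (minHopsD_le_succ w hxfin (by rw [hyu, ← hpred, heq])).trans hhops
      refine keyLt_of_le_of_tie_lt hyu.le (Prod.lex_def.mpr ?_)
      rcases hhy.lt_or_eq with hlt | hhyu
      · exact Or.inl hlt
      · exact Or.inr ⟨hhyu, hrank⟩

variable [DecidableEq V]

theorem mem_nb_of_pred (hnb : IsKNbhd w k rank nb) {S : Finset V}
    (hS : IsKNear (dist w v) (fun z => (minHopsD w v z, rank z)) Finset.univ k v S)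
    (hu : u ∈ S) (hpred : dist w v x + w x u = dist w v u)
    (hhops : minHopsD w v x + 1 ≤ minHopsD w v u) : u ∈ nb x := by
  by_contra hun
  have hfin : dist w v u ≠ ⊤ := (hS.2.2.2.1 u hu).ne
  have hux : u ≠ x := by rintro rfl; omega
  have hwfin : w x u < ⊤ := (ENNReal.add_ne_top.mp (hpred ▸ hfin)).2.lt_top
  have hcard : (nb x).card = k := (hnb x).2.2.2 u hux hwfin hun
  have hx : x ∉ nb x := fun hx => ((hnb x).1 x hx).1 rfl
  have hlt := hS.card_lt_of_forall_keyLt hu (Finset.subset_univ ((insert x (nb x)).erase v))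
    fun z hz => by
      refine ⟨Finset.ne_of_mem_erase hz, ?_⟩
      rcases Finset.mem_insert.mp (Finset.mem_of_mem_erase hz) with rfl | hz
      · exact keyLt_of_pred rank hpred hhops
      · exact keyLt_of_mem_nb hnb hfin hpred hhops hz hun
  have := Finset.pred_card_le_card_erase (s := insert x (nb x)) (a := v)
  rw [Finset.card_insert_of_notMem hx, hcard] at this
  omega

theorem dist_nbhdW_le_of_mem (hnb : IsKNbhd w k rank nb) {S : Finset V}
    (hS : IsKNear (dist w v) (fun z => (minHopsD w v z, rank z)) Finset.univ k v S)
    (hu : u ∈ S) : dist (nbhdW w nb) v u ≤ dist w v u := by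
  induction hn : minHopsD w v u using Nat.strong_induction_on generalizing u with
  | _ n ih =>
  have huv : u ≠ v := fun e => hS.2.1 (e ▸ hu)
  obtain ⟨x, hpred, hhops⟩ := exists_pred_minHopsD w huv (hS.2.2.2.1 u hu).ne
  have hx : dist (nbhdW w nb) v x ≤ dist w v x := by
    rcases eq_or_ne x v with rfl | hxv
    · simp [dist_self]
    · exact ih _ (hn ▸ hhops) (hS.mem_of_keyLt hu (Finset.mem_univ x) hxv
        (keyLt_of_pred rank hpred hhops)) rfl
  calc dist (nbhdW w nb) v u ≤ dist (nbhdW w nb) v x + nbhdW w nb x u :=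
        dist_le_dist_add _ v x u
    _ ≤ dist w v x + w x u := by
        rw [nbhdW, if_pos (Or.inl (mem_nb_of_pred hnb hS hu hpred hhops))]
        exact add_le_add_left hx _
    _ = dist w v u := hpred

end NeighborhoodGraph

theorem knear_in_neighborhood_graph_eq [Fintype V] [DecidableEq V]
    (w : V → V → ℝ≥0∞)
    (k : ℕ)
    (rank : V → ℕ)
    (nb : V → Finset V) (hnb : IsKNbhd w k rank nb)
    (v : V) (S₁ S₂ : Finset V)
    (hS₁ : IsKNear (dist (nbhdW w nb) v) (fun x => (minHopsD w v x, rank x))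
      Finset.univ k v S₁)
    (hS₂ : IsKNear (dist w v) (fun x => (minHopsD w v x, rank x))
      Finset.univ k v S₂) :
    S₁ = S₂ :=
  hS₁.eq (hS₂.mono (dist_mono (le_nbhdW w nb) v)
    fun _ hu => dist_nbhdW_le_of_mem hnb hS₂ hu)

end Stmt14
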